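/- Let Π be a Label Cover instance with bipartite constraint graph on vertex sets A, B with |A| = |B| = n, where every vertex has degree exactly D. Let γ > 0, and suppose val(Π) < γ. Then every multilabeling ψ of Π with total cost Σ_v |ψ(v)| ≤ 0.12n/√γ satisfies strictly less than half of the edges. -/

import Mathlib

/-!
Suppose at least half of the edges are satisfied by `ψ` and set `t = 1 / (2√γ)`. By Markov's
inequality at most `0.24 n` vertices carry more than `t` labels, and by regularity they touch at
most `0.24 nD` edges, so at least `0.26 nD` satisfied edges join two vertices with at most `t`
labels each. Choosing one label per vertex uniformly from `ψ`, each such edge is satisfied with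
probability at least `1 / t² = 4γ`, so some labeling satisfies at least `1.04 γ nD > γ |E|` edges.
-/

open Finset

theorem mul_card_filter_lt_le_sum {ι : Type*} (s : Finset ι) {f : ι → ℝ}
    (hf : ∀ x ∈ s, 0 ≤ f x) (t : ℝ) : t * #{x ∈ s | t < f x} ≤ ∑ x ∈ s, f x :=
  calc t * #{x ∈ s | t < f x} = #{x ∈ s | t < f x} • t := by rw [nsmul_eq_mul, mul_comm]
    _ ≤ ∑ x ∈ s with t < f x, f x := card_nsmul_le_sum _ _ _ fun x hx => (mem_filter.1 hx).2.le
    _ ≤ ∑ x ∈ s, f x := sum_le_sum_of_subset_of_nonneg (filter_subset _ _) fun x hx _ => hf x hx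

section Fibers

variable {α β : Type*} [DecidableEq β] {s : Finset α} {f : α → β} {D : ℕ}

theorem card_eq_card_mul_of_card_fiber_eq [Fintype β] (hD : ∀ b, #{x ∈ s | f x = b} = D) :
    #s = Fintype.card β * D := by
  rw [card_eq_sum_card_fiberwise (t := univ) fun x _ => mem_univ (f x)]
  simp [hD]

theorem card_filter_mem_le_mul_card (hD : ∀ b, #{x ∈ s | f x = b} ≤ D) (t : Finset β) :
    #{x ∈ s | f x ∈ t} ≤ D * #t :=
  card_le_mul_card_image_of_maps_to (fun x hx => (mem_filter.1 hx).2) D fun b _ =>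
    (card_le_card fun x hx => by simp only [mem_filter] at hx ⊢; exact ⟨hx.1.1, hx.2⟩).trans (hD b)

end Fibers

namespace Fintype

variable {ι : Type*} [Fintype ι] [DecidableEq ι]

theorem card_piFinset_eq_card_mul_card_filter {α : ι → Type*} [∀ i, DecidableEq (α i)]
    (s : ∀ i, Finset (α i)) {i : ι} {a : α i} (ha : a ∈ s i) :
    #(piFinset s) = #(s i) * #{f ∈ piFinset s | f i = a} := by
  rw [card_filter_piFinset_eq_of_mem _ _ ha, card_piFinset]
  exact (mul_prod_erase _ _ (mem_univ i)).symm

theorem card_piFinset_eq_card_mul_card_mul_card_filter_and {α : Type*} [DecidableEq α]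
    (s : ι → Finset α) {i j : ι} (hij : i ≠ j) {a b : α} (ha : a ∈ s i) (hb : b ∈ s j) :
    #(piFinset s) = #(s i) * #(s j) * #{f ∈ piFinset s | f i = a ∧ f j = b} := by
  have hb' : b ∈ Function.update s i {a} j := by rwa [Function.update_of_ne hij.symm]
  rw [card_piFinset_eq_card_mul_card_filter s ha,
    ← piFinset_update_singleton_eq_filter_piFinset_eq _ _ ha,
    card_piFinset_eq_card_mul_card_filter _ hb', Function.update_of_ne hij.symm,
    piFinset_update_singleton_eq_filter_piFinset_eq _ _ ha, filter_filter, mul_assoc]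

end Fintype

section LabelCover

variable {A B Lab : Type*} [DecidableEq A] [DecidableEq B] [DecidableEq Lab]

theorem card_filter_incident_le {E : Finset (A × B)} {D : ℕ}
    (hdegA : ∀ a, #{e ∈ E | e.1 = a} ≤ D) (hdegB : ∀ b, #{e ∈ E | e.2 = b} ≤ D)
    (S : Finset (A ⊕ B)) : #{e ∈ E | Sum.inl e.1 ∈ S ∨ Sum.inr e.2 ∈ S} ≤ D * #S := by
  rw [filter_or, ← card_toLeft_add_card_toRight, mul_add]
  refine (card_union_le _ _).trans (add_le_add ?_ ?_)
  · simpa only [mem_toLeft] using card_filter_mem_le_mul_card hdegA S.toLeft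
  · simpa only [mem_toRight] using card_filter_mem_le_mul_card hdegB S.toRight

theorem card_filter_le_card_filter_avoiding_add {E : Finset (A × B)} {D : ℕ}
    (hdegA : ∀ a, #{e ∈ E | e.1 = a} ≤ D) (hdegB : ∀ b, #{e ∈ E | e.2 = b} ≤ D)
    (S : Finset (A ⊕ B)) (p : A × B → Prop) [DecidablePred p] :
    #{e ∈ E | p e} ≤ #{e ∈ E | p e ∧ Sum.inl e.1 ∉ S ∧ Sum.inr e.2 ∉ S} + D * #S := by
  have hcover : {e ∈ E | p e} ⊆
      {e ∈ E | p e ∧ Sum.inl e.1 ∉ S ∧ Sum.inr e.2 ∉ S} ∪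
        {e ∈ E | Sum.inl e.1 ∈ S ∨ Sum.inr e.2 ∈ S} := by
    intro e
    simp only [mem_filter, mem_union]
    tauto
  exact ((card_le_card hcover).trans (card_union_le _ _)).trans
    (Nat.add_le_add_left (card_filter_incident_le hdegA hdegB S) _)

variable [Fintype A] [Fintype B] (E : Finset (A × B)) (π : A × B → Lab → Lab)

theorem exists_labeling_of_multilabeling_of_nonempty (ψ : A ⊕ B → Finset Lab)
    (hψ : ∀ v, (ψ v).Nonempty) {F : Finset (A × B)} (hFE : F ⊆ E) {c : ℝ} (hc : 0 ≤ c)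
    (hF : ∀ e ∈ F, (∃ σ ∈ ψ (.inl e.1), π e σ ∈ ψ (.inr e.2)) ∧
      (#(ψ (.inl e.1)) * #(ψ (.inr e.2)) : ℝ) ≤ c) :
    ∃ φ : A ⊕ B → Lab, (#F : ℝ) ≤ c * #{e ∈ E | π e (φ (.inl e.1)) = φ (.inr e.2)} := by
  set Φ := Fintype.piFinset ψ
  have hedge : ∀ e ∈ F, (#Φ : ℝ) ≤ c * #{φ ∈ Φ | π e (φ (.inl e.1)) = φ (.inr e.2)} := by
    intro e he
    obtain ⟨⟨σ, hσ, hτ⟩, hcard⟩ := hF e he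
    have hsub : {φ ∈ Φ | φ (.inl e.1) = σ ∧ φ (.inr e.2) = π e σ} ⊆
        {φ ∈ Φ | π e (φ (.inl e.1)) = φ (.inr e.2)} :=
      monotone_filter_right _ fun φ _ h => by rw [h.1, h.2]
    rw [Fintype.card_piFinset_eq_card_mul_card_mul_card_filter_and ψ Sum.inl_ne_inr hσ hτ]
    push_cast
    exact mul_le_mul hcard (by exact_mod_cast card_le_card hsub) (Nat.cast_nonneg _) hc
  have hsum : ∑ _φ ∈ Φ, (#F : ℝ) ≤ ∑ φ ∈ Φ, c * #{e ∈ E | π e (φ (.inl e.1)) = φ (.inr e.2)} :=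
    calc ∑ _φ ∈ Φ, (#F : ℝ) = ∑ _e ∈ F, (#Φ : ℝ) := by simp [mul_comm]
      _ ≤ ∑ e ∈ F, c * #{φ ∈ Φ | π e (φ (.inl e.1)) = φ (.inr e.2)} := sum_le_sum hedge
      _ ≤ ∑ e ∈ E, c * #{φ ∈ Φ | π e (φ (.inl e.1)) = φ (.inr e.2)} :=
        sum_le_sum_of_subset_of_nonneg hFE fun _ _ _ => by positivity
      _ = ∑ φ ∈ Φ, c * #{e ∈ E | π e (φ (.inl e.1)) = φ (.inr e.2)} := by
        rw [← mul_sum, ← mul_sum]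
        congr 1
        exact_mod_cast sum_card_bipartiteAbove_eq_sum_card_bipartiteBelow
          (fun (e : A × B) (φ : A ⊕ B → Lab) => π e (φ (.inl e.1)) = φ (.inr e.2))
  obtain ⟨φ, -, hφ⟩ := exists_le_of_sum_le (Fintype.piFinset_nonempty.2 hψ) hsum
  exact ⟨φ, hφ⟩

theorem exists_labeling_of_multilabeling [Nonempty Lab] (ψ : A ⊕ B → Finset Lab)
    {F : Finset (A × B)} (hFE : F ⊆ E) {c : ℝ} (hc : 0 ≤ c)
    (hF : ∀ e ∈ F, (∃ σ ∈ ψ (.inl e.1), π e σ ∈ ψ (.inr e.2)) ∧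
      (#(ψ (.inl e.1)) * #(ψ (.inr e.2)) : ℝ) ≤ c) :
    ∃ φ : A ⊕ B → Lab, (#F : ℝ) ≤ c * #{e ∈ E | π e (φ (.inl e.1)) = φ (.inr e.2)} := by
  set ψ' : A ⊕ B → Finset Lab := fun v => if (ψ v).Nonempty then ψ v else {Classical.arbitrary Lab}
  have hψ' : ∀ v, (ψ v).Nonempty → ψ' v = ψ v := fun v hv => if_pos hv
  refine exists_labeling_of_multilabeling_of_nonempty E π ψ' (fun v => ?_) hFE hc fun e he => ?_
  · by_cases hv : (ψ v).Nonempty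
    · rwa [hψ' v hv]
    · simp only [ψ', if_neg hv, singleton_nonempty]
  · obtain ⟨⟨σ, hσ, hτ⟩, hcard⟩ := hF e he
    rw [hψ' _ ⟨σ, hσ⟩, hψ' _ ⟨_, hτ⟩]
    exact ⟨⟨σ, hσ, hτ⟩, hcard⟩

end LabelCover

theorem stmt_3_general {A B Lab : Type} [Fintype A] [Fintype B] [Fintype Lab]
    [DecidableEq A] [DecidableEq B] [DecidableEq Lab]
    (E : Finset (A × B)) (π : A × B → Lab → Lab)
    (n D : ℕ) (hn : 0 < n) (hD : 0 < D)
    (hA : Fintype.card A = n)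
    (hdegA : ∀ a : A, (E.filter fun e => e.1 = a).card = D)
    (hdegB : ∀ b : B, (E.filter fun e => e.2 = b).card = D)
    (hLab : Nonempty Lab) (γ : ℝ) (hγ : 0 < γ)
    (hval : ∀ φ : (A ⊕ B) → Lab,
      ((E.filter fun e => π e (φ (Sum.inl e.1)) = φ (Sum.inr e.2)).card : ℝ) / E.card < γ)
    (ψ : A ⊕ B → Finset Lab)
    (hcost : (∑ v, ((ψ v).card : ℝ)) ≤ 0.12 * n / Real.sqrt γ) :
    ((E.filter fun e => ∃ σ ∈ ψ (Sum.inl e.1), π e σ ∈ ψ (Sum.inr e.2)).card : ℝ)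
      < 0.5 * E.card := by
  have hE : (#E : ℝ) = n * D := by
    rw [card_eq_card_mul_of_card_fiber_eq hdegA, hA, Nat.cast_mul]
  have hEpos : (0 : ℝ) < #E := by rw [hE]; positivity
  by_contra! hsat
  set t : ℝ := 1 / (2 * √γ) with ht
  have htt : t * t = 1 / (4 * γ) := by
    rw [ht, div_mul_div_comm, mul_mul_mul_comm, Real.mul_self_sqrt hγ.le]; norm_num
  set big : Finset (A ⊕ B) := {v | t < #(ψ v)}
  have hbig : (#big : ℝ) ≤ 0.24 * n := by
    refine le_of_mul_le_mul_left ?_ (by positivity : 0 < t)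
    calc t * #big ≤ ∑ v, (#(ψ v) : ℝ) := mul_card_filter_lt_le_sum univ (by simp) t
      _ ≤ 0.12 * n / √γ := hcost
      _ = t * (0.24 * n) := by rw [ht]; ring
  set F := {e ∈ E | (∃ σ ∈ ψ (.inl e.1), π e σ ∈ ψ (.inr e.2)) ∧
    Sum.inl e.1 ∉ big ∧ Sum.inr e.2 ∉ big}
  have hF : 0.26 * (#E : ℝ) ≤ #F := by
    have hsplit : (#{e ∈ E | ∃ σ ∈ ψ (.inl e.1), π e σ ∈ ψ (.inr e.2)} : ℝ) ≤ #F + D * #big := by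
      norm_cast
      convert card_filter_le_card_filter_avoiding_add (hdegA · |>.le) (hdegB · |>.le) big
        fun e => ∃ σ ∈ ψ (.inl e.1), π e σ ∈ ψ (.inr e.2)
    have : (D : ℝ) * #big ≤ D * (0.24 * n) := by gcongr
    linarith
  have hFgood : ∀ e ∈ F, (∃ σ ∈ ψ (.inl e.1), π e σ ∈ ψ (.inr e.2)) ∧
      (#(ψ (.inl e.1)) * #(ψ (.inr e.2)) : ℝ) ≤ 1 / (4 * γ) := by
    intro e he
    simp only [F, big, mem_filter, mem_univ, true_and, not_lt] at he
    obtain ⟨-, hsat, hta, htb⟩ := he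
    exact ⟨hsat, htt ▸ mul_le_mul hta htb (Nat.cast_nonneg _) (by positivity)⟩
  obtain ⟨φ, hφ⟩ := exists_labeling_of_multilabeling E π ψ
    (fun e he => by simp only [F, mem_filter] at he; exact he.1) (by positivity) hFgood
  have hφval := (div_lt_iff₀ hEpos).1 (hval φ)
  have : 1 / (4 * γ) * (#{e ∈ E | π e (φ (.inl e.1)) = φ (.inr e.2)} : ℝ) < #E / 4 :=
    calc _ < 1 / (4 * γ) * (γ * #E) := by gcongr
      _ = #E / 4 := by field_simp
  linarith

/-- Soundness conversion (Proposition `max-to-min`): in a `D`-regular Label Cover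
instance with `|A| = |B| = n` and `val(Π) < γ`, every multilabeling of cost at most
`0.12 n / √γ` satisfies strictly less than half of the edges. -/
theorem stmt_3 {A B Lab : Type} [Fintype A] [Fintype B] [Fintype Lab]
    [DecidableEq A] [DecidableEq B] [DecidableEq Lab]
    (E : Finset (A × B)) (π : A × B → Lab → Lab)
    (n D : ℕ) (hn : 0 < n) (hD : 0 < D)
    (hA : Fintype.card A = n) (hB : Fintype.card B = n)
    (hdegA : ∀ a : A, (E.filter fun e => e.1 = a).card = D)
    (hdegB : ∀ b : B, (E.filter fun e => e.2 = b).card = D)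
    (hLab : Nonempty Lab) (γ : ℝ) (hγ : 0 < γ)
    (hval : ∀ φ : (A ⊕ B) → Lab,
      ((E.filter fun e => π e (φ (Sum.inl e.1)) = φ (Sum.inr e.2)).card : ℝ) / E.card < γ)
    (ψ : A ⊕ B → Finset Lab)
    (hcost : (∑ v, ((ψ v).card : ℝ)) ≤ 0.12 * n / Real.sqrt γ) :
    ((E.filter fun e => ∃ σ ∈ ψ (Sum.inl e.1), π e σ ∈ ψ (Sum.inr e.2)).card : ℝ)
      < 0.5 * E.card :=
  stmt_3_general E π n D hn hD hA hdegA hdegB hLab γ hγ hval ψ hcost
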